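/- arXiv:1409.2979 — 4 statements merged into one kernel-verified Lean document; each statement's English description precedes it below -/
import Mathlib

section
/- Let F be (m + μ_h)-strongly convex with minimizer x⁺, and suppose F ≤ f + e pointwise and f ≤ F pointwise, where f has minimizer x* and e : ℝ^p → ℝ is an error function. Then f(x⁺) + ((m + μ_h)/2)‖x* − x⁺‖² ≤ f(x*) + e(x*). In particular f(x⁺) − f(x*) ≤ e(x*) and ‖x⁺ − x*‖² ≤ 2e(x*)/(m + μ_h). -/
theorem stmt_8 (p : ℕ) (F f e : EuclideanSpace ℝ (Fin p) → ℝ) (m μh : ℝ)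
    (hpos : 0 < m + μh)
    (hF : ConvexOn ℝ Set.univ (fun x => F x - (m + μh) / 2 * ‖x‖ ^ 2))
    (xplus : EuclideanSpace ℝ (Fin p)) (hxplus : ∀ x, F xplus ≤ F x)
    (hle : ∀ x, f x ≤ F x) (hub : ∀ x, F x ≤ f x + e x)
    (he : ∀ x, 0 ≤ e x)
    (xstar : EuclideanSpace ℝ (Fin p)) (hxstar : ∀ x, f xstar ≤ f x) :
    f xplus + (m + μh) / 2 * ‖xstar - xplus‖ ^ 2 ≤ f xstar + e xstar ∧
    f xplus - f xstar ≤ e xstar ∧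
    ‖xplus - xstar‖ ^ 2 ≤ 2 * e xstar / (m + μh) := by
  set c := m + μh
  have hsc : StrongConvexOn Set.univ c F := strongConvexOn_iff_convex.mpr hF
  -- key: growth from minimizer
  have key : ∀ x, F xplus + c / 2 * ‖x - xplus‖ ^ 2 ≤ F x := by
    intro x
    set D := c / 2 * ‖x - xplus‖ ^ 2 with hD
    have hD0 : 0 ≤ D := by positivity
    refine le_of_forall_pos_le_add fun ε hε => ?_
    rcases le_or_gt D ε with h | h
    · nlinarith [hxplus x]
    · have hDpos : 0 < D := lt_trans hε h
      set t : ℝ := ε / D with ht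
      have ht0 : 0 < t := div_pos hε hDpos
      have ht1 : t < 1 := (div_lt_one hDpos).2 h
      have h2 := hsc.2 (Set.mem_univ x) (Set.mem_univ xplus)
        (le_of_lt ht0) (by linarith : (0:ℝ) ≤ 1 - t) (by ring)
      have h3 : F xplus ≤ F (t • x + (1 - t) • xplus) := hxplus _
      simp only [smul_eq_mul] at h2
      have h4 : F xplus ≤ t * F x + (1 - t) * F xplus - t * (1 - t) * (c / 2 * ‖x - xplus‖ ^ 2) :=
        le_trans h3 h2
      have h5 : t * (F xplus + (1 - t) * D) ≤ t * F x := by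
        rw [hD]; nlinarith
      have h6 : F xplus + (1 - t) * D ≤ F x := le_of_mul_le_mul_left (by linarith) ht0
      have htD : t * D = ε := by rw [ht, div_mul_cancel₀ ε hDpos.ne']
      nlinarith
  have h1 : f xplus + c / 2 * ‖xstar - xplus‖ ^ 2 ≤ f xstar + e xstar := by
    have := key xstar
    have := hle xplus
    have := hub xstar
    linarith
  have hnn : 0 ≤ c / 2 * ‖xstar - xplus‖ ^ 2 := by positivity
  refine ⟨h1, by linarith [hxstar xplus], ?_⟩
  rw [le_div_iff₀ hpos, norm_sub_rev]
  have h7 : c / 2 * ‖xstar - xplus‖ ^ 2 ≤ e xstar := by linarith [hxstar xplus]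
  calc ‖xstar - xplus‖ ^ 2 * c = 2 * (c / 2 * ‖xstar - xplus‖ ^ 2) := by ring
    _ ≤ 2 * e xstar := by linarith
end

section
/- Let h : ℝ^p → ℝ ∪ {∞} be proper convex and H symmetric positive definite with m·I ⪯ H. Suppose d₁ minimizes d ↦ ⟨v₁, d⟩ + (1/2)⟨d, Hd⟩ + h(x + d) and d₂ minimizes d ↦ ⟨v₂, d⟩ + (1/2)⟨d, Hd⟩ + h(x + d). Then m‖d₁ − d₂‖² ≤ ‖v₁ − v₂‖·‖d₁ − d₂‖, hence ‖d₁ − d₂‖ ≤ ‖v₁ − v₂‖/m. -/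
open RealInnerProductSpace

lemma stmt_12_aux (p : ℕ) (h : EuclideanSpace ℝ (Fin p) → ℝ)
    (hconv : ConvexOn ℝ Set.univ h)
    (H : EuclideanSpace ℝ (Fin p) →ₗ[ℝ] EuclideanSpace ℝ (Fin p))
    (hsym : ∀ u v, ⟪H u, v⟫ = ⟪u, H v⟫)
    (m : ℝ) (hm : 0 < m) (hpos : ∀ d, m * ‖d‖ ^ 2 ≤ ⟪d, H d⟫)
    (x v₁ d₁ : EuclideanSpace ℝ (Fin p))
    (hd₁ : ∀ d, ⟪v₁, d₁⟫ + (1 / 2) * ⟪d₁, H d₁⟫ + h (x + d₁) ≤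
      ⟪v₁, d⟫ + (1 / 2) * ⟪d, H d⟫ + h (x + d)) :
    ∀ d, 0 ≤ ⟪v₁, d - d₁⟫ + ⟪d₁, H (d - d₁)⟫ + (h (x + d) - h (x + d₁)) := by
  intro d
  set e := d - d₁ with he
  set a : ℝ := ⟪v₁, e⟫ + ⟪d₁, H e⟫ + (h (x + d) - h (x + d₁)) with ha
  set b : ℝ := (1 / 2) * ⟪e, H e⟫ with hb
  have hbnn : 0 ≤ b := by
    have := hpos e
    have : 0 ≤ ⟪e, H e⟫ := le_trans (by positivity) this
    rw [hb]; linarith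
  have key : ∀ t : ℝ, 0 < t → t ≤ 1 → 0 ≤ a + t * b := by
    intro t ht ht1
    have h1 := hd₁ (d₁ + t • e)
    have heq : x + (d₁ + t • e) = (1 - t) • (x + d₁) + t • (x + d) := by
      rw [he]; module
    have hcv : h ((1 - t) • (x + d₁) + t • (x + d)) ≤
        (1 - t) * h (x + d₁) + t * h (x + d) :=
      hconv.2 (Set.mem_univ _) (Set.mem_univ _) (by linarith) (le_of_lt ht) (by ring)
    have e1 : ⟪v₁, d₁ + t • e⟫ = ⟪v₁, d₁⟫ + t * ⟪v₁, e⟫ := by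
      simp only [inner_add_right, real_inner_smul_right]
    have hs : ⟪e, H d₁⟫ = ⟪d₁, H e⟫ := by
      rw [← hsym]; exact real_inner_comm _ _
    have e2 : ⟪d₁ + t • e, H (d₁ + t • e)⟫ =
        ⟪d₁, H d₁⟫ + 2 * t * ⟪d₁, H e⟫ + t ^ 2 * ⟪e, H e⟫ := by
      simp only [map_add, map_smul, inner_add_left, inner_add_right,
        real_inner_smul_left, real_inner_smul_right, hs]
      ring
    rw [heq] at h1
    have h2 : ⟪v₁, d₁⟫ + (1 / 2) * ⟪d₁, H d₁⟫ + h (x + d₁) ≤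
        (⟪v₁, d₁⟫ + t * ⟪v₁, e⟫) +
        (1 / 2) * (⟪d₁, H d₁⟫ + 2 * t * ⟪d₁, H e⟫ + t ^ 2 * ⟪e, H e⟫) +
        ((1 - t) * h (x + d₁) + t * h (x + d)) := by
      calc _ ≤ _ := h1
        _ ≤ _ := by rw [e1, e2]; linarith
    have h3 : 0 ≤ t * (a + t * b) := by rw [ha, hb]; nlinarith [h2]
    exact nonneg_of_mul_nonneg_right h3 ht
  by_contra hcon
  push_neg at hcon
  set t₀ : ℝ := min 1 (-a / (2 * (b + 1))) with ht₀
  have hden : (0:ℝ) < 2 * (b + 1) := by linarith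
  have ht₀pos : 0 < t₀ := lt_min one_pos (div_pos (by linarith) hden)
  have ht₀le1 : t₀ ≤ 1 := min_le_left _ _
  have ht₀le : t₀ ≤ -a / (2 * (b + 1)) := min_le_right _ _
  have := key t₀ ht₀pos ht₀le1
  have hmul : t₀ * (2 * (b + 1)) ≤ -a := (le_div_iff₀ hden).mp ht₀le
  have htb : 0 ≤ t₀ * b := mul_nonneg ht₀pos.le hbnn
  nlinarith [this, hmul, htb, ht₀pos]

theorem stmt_12 (p : ℕ) (h : EuclideanSpace ℝ (Fin p) → ℝ)
    (hconv : ConvexOn ℝ Set.univ h) (hlsc : LowerSemicontinuous h)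
    (H : EuclideanSpace ℝ (Fin p) →ₗ[ℝ] EuclideanSpace ℝ (Fin p))
    (hsym : ∀ u v, ⟪H u, v⟫ = ⟪u, H v⟫)
    (m : ℝ) (hm : 0 < m) (hpos : ∀ d, m * ‖d‖ ^ 2 ≤ ⟪d, H d⟫)
    (x v₁ v₂ d₁ d₂ : EuclideanSpace ℝ (Fin p))
    (hd₁ : ∀ d, ⟪v₁, d₁⟫ + (1 / 2) * ⟪d₁, H d₁⟫ + h (x + d₁) ≤
      ⟪v₁, d⟫ + (1 / 2) * ⟪d, H d⟫ + h (x + d))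
    (hd₂ : ∀ d, ⟪v₂, d₂⟫ + (1 / 2) * ⟪d₂, H d₂⟫ + h (x + d₂) ≤
      ⟪v₂, d⟫ + (1 / 2) * ⟪d, H d⟫ + h (x + d)) :
    m * ‖d₁ - d₂‖ ^ 2 ≤ ‖v₁ - v₂‖ * ‖d₁ - d₂‖ ∧ ‖d₁ - d₂‖ ≤ ‖v₁ - v₂‖ / m := by
  have A1 := stmt_12_aux p h hconv H hsym m hm hpos x v₁ d₁ hd₁ d₂
  have A2 := stmt_12_aux p h hconv H hsym m hm hpos x v₂ d₂ hd₂ d₁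
  have hHs : ∀ u v : EuclideanSpace ℝ (Fin p), ⟪u, H v⟫ = ⟪v, H u⟫ := by
    intro u v; rw [← hsym]; exact real_inner_comm _ _
  set g := d₁ - d₂ with hg
  have exp1 : ⟪d₁, H (d₂ - d₁)⟫ = ⟪d₁, H d₂⟫ - ⟪d₁, H d₁⟫ := by
    simp [map_sub, inner_sub_right]
  have exp2 : ⟪d₂, H (d₁ - d₂)⟫ = ⟪d₁, H d₂⟫ - ⟪d₂, H d₂⟫ := by
    simp [map_sub, inner_sub_right, hHs d₂ d₁]
  have expg : ⟪g, H g⟫ = ⟪d₁, H d₁⟫ - 2 * ⟪d₁, H d₂⟫ + ⟪d₂, H d₂⟫ := by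
    rw [hg]
    simp only [map_sub, inner_sub_left, inner_sub_right, hHs d₂ d₁]
    ring
  have expv1 : ⟪v₁, d₂ - d₁⟫ = ⟪v₁, d₂⟫ - ⟪v₁, d₁⟫ := by simp [inner_sub_right]
  have expv2 : ⟪v₂, d₁ - d₂⟫ = ⟪v₂, d₁⟫ - ⟪v₂, d₂⟫ := by simp [inner_sub_right]
  have expvv : ⟪v₂ - v₁, g⟫ = (⟪v₂, d₁⟫ - ⟪v₂, d₂⟫) - (⟪v₁, d₁⟫ - ⟪v₁, d₂⟫) := by
    rw [hg]; simp [inner_sub_left, inner_sub_right]; ring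
  have step1 : ⟪g, H g⟫ ≤ ⟪v₂ - v₁, g⟫ := by
    rw [expg, expvv]
    rw [exp1, expv1] at A1
    rw [exp2, expv2] at A2
    linarith
  have step2 : ⟪v₂ - v₁, g⟫ ≤ ‖v₁ - v₂‖ * ‖g‖ := by
    have := real_inner_le_norm (v₂ - v₁) g
    rwa [norm_sub_rev] at this
  have main : m * ‖g‖ ^ 2 ≤ ‖v₁ - v₂‖ * ‖g‖ := le_trans (hpos g) (le_trans step1 step2)
  refine ⟨main, ?_⟩
  rcases eq_or_lt_of_le (norm_nonneg g) with hz | hz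
  · rw [← hz]; positivity
  · rw [le_div_iff₀ hm]
    have := mul_le_mul_of_nonneg_right main (le_of_lt (inv_pos.mpr hz))
    calc ‖g‖ * m = (m * ‖g‖ ^ 2) * ‖g‖⁻¹ := by field_simp
      _ ≤ (‖v₁ - v₂‖ * ‖g‖) * ‖g‖⁻¹ := this
      _ = ‖v₁ - v₂‖ := by field_simp
end

section
/- In the setting of Theorem 1 of the paper: suppose each ∇gᵢ is Lᵢ-Lipschitz, each surrogate Hessian satisfies m·I ⪯ Hᵏᵢ ⪯ M·I with m ≥ Lᵢ, h is μ_h-strongly convex, and x^{k+1} minimizes Gᵏ + h where Gᵏ(x) = (1/n)∑ᵢ[gᵢ(xᶿⁱ) + ⟨∇gᵢ(xᶿⁱ), x − xᶿⁱ⟩ + (1/2)⟨x − xᶿⁱ, Hᵢ(x − xᶿⁱ)⟩] with anchor points xᶿⁱ. Then for every x: f(x^{k+1}) + ((m+μ_h)/2)‖x − x^{k+1}‖² ≤ f(x) + (1/n)∑ᵢ ((M+Lᵢ)/2)‖x − xᶿⁱ‖², where f = (1/n)∑gᵢ + h. -/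
open RealInnerProductSpace Finset

lemma descent_upper {p : ℕ} (g : EuclideanSpace ℝ (Fin p) → ℝ) (L : ℝ)
    (hdiff : Differentiable ℝ g)
    (hlip : ∀ x y, ‖gradient g x - gradient g y‖ ≤ L * ‖x - y‖)
    (x d : EuclideanSpace ℝ (Fin p)) :
    g (x + d) ≤ g x + ⟪gradient g x, d⟫ + L / 2 * ‖d‖ ^ 2 := by
  set φ : ℝ → ℝ := fun t => g (x + t • d) - t * ⟪gradient g x, d⟫ - L * t ^ 2 / 2 * ‖d‖ ^ 2 with hφ
  have hφd : ∀ t : ℝ, HasDerivAt φ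
      (⟪gradient g (x + t • d), d⟫ - ⟪gradient g x, d⟫ - L * t * ‖d‖ ^ 2) t := by
    intro t
    have hline : HasDerivAt (fun t : ℝ => x + t • d) d t := by
      simpa using ((hasDerivAt_id t).smul_const d).const_add x
    have hg : HasFDerivAt g (InnerProductSpace.toDual ℝ _ (gradient g (x + t • d))) (x + t • d) :=
      ((hdiff _).hasGradientAt).hasFDerivAt
    have h1 : HasDerivAt (fun t : ℝ => g (x + t • d)) (⟪gradient g (x + t • d), d⟫) t := by
      exact hg.comp_hasDerivAt t hline
    have h2 : HasDerivAt (fun t : ℝ => t * ⟪gradient g x, d⟫) (⟪gradient g x, d⟫) t := by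
      simpa using (hasDerivAt_id t).mul_const (⟪gradient g x, d⟫)
    have h3 : HasDerivAt (fun t : ℝ => L * t ^ 2 / 2 * ‖d‖ ^ 2) (L * t * ‖d‖ ^ 2) t := by
      have := ((hasDerivAt_pow 2 t).const_mul L).div_const 2
      have := this.mul_const (‖d‖ ^ 2)
      refine this.congr_deriv ?_
      ring
    exact (h1.sub h2).sub h3
  have hanti : AntitoneOn φ (Set.Icc 0 1) := by
    have hdφ : Differentiable ℝ φ := fun t => (hφd t).differentiableAt
    refine antitoneOn_of_deriv_nonpos (convex_Icc 0 1) hdφ.continuous.continuousOn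
      (fun t _ => (hdφ t).differentiableWithinAt) (fun t ht => ?_)
    rw [interior_Icc] at ht
    rw [(hφd t).deriv]
    have h1 : ⟪gradient g (x + t • d) - gradient g x, d⟫ ≤ L * t * ‖d‖ ^ 2 := by
      calc ⟪gradient g (x + t • d) - gradient g x, d⟫
          ≤ ‖gradient g (x + t • d) - gradient g x‖ * ‖d‖ := real_inner_le_norm _ _
        _ ≤ (L * ‖(x + t • d) - x‖) * ‖d‖ :=
            mul_le_mul_of_nonneg_right (hlip _ _) (norm_nonneg _)
        _ = L * t * ‖d‖ ^ 2 := by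
            rw [add_sub_cancel_left, norm_smul, Real.norm_eq_abs, abs_of_pos ht.1]
            ring
    rw [inner_sub_left] at h1
    linarith
  have h01 := hanti (Set.left_mem_Icc.mpr zero_le_one) (Set.right_mem_Icc.mpr zero_le_one) zero_le_one
  simp only [hφ, one_smul, zero_smul, add_zero, one_pow, zero_pow, one_mul, zero_mul,
    mul_zero, sub_zero, mul_one] at h01
  linarith [h01]

lemma descent_lower {p : ℕ} (g : EuclideanSpace ℝ (Fin p) → ℝ) (L : ℝ)
    (hdiff : Differentiable ℝ g)
    (hlip : ∀ x y, ‖gradient g x - gradient g y‖ ≤ L * ‖x - y‖)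
    (x d : EuclideanSpace ℝ (Fin p)) :
    g x + ⟪gradient g x, d⟫ - L / 2 * ‖d‖ ^ 2 ≤ g (x + d) := by
  set φ : ℝ → ℝ := fun t => g (x + t • d) - t * ⟪gradient g x, d⟫ + L * t ^ 2 / 2 * ‖d‖ ^ 2 with hφ
  have hφd : ∀ t : ℝ, HasDerivAt φ
      (⟪gradient g (x + t • d), d⟫ - ⟪gradient g x, d⟫ + L * t * ‖d‖ ^ 2) t := by
    intro t
    have hline : HasDerivAt (fun t : ℝ => x + t • d) d t := by
      simpa using ((hasDerivAt_id t).smul_const d).const_add x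
    have hg : HasFDerivAt g (InnerProductSpace.toDual ℝ _ (gradient g (x + t • d))) (x + t • d) :=
      ((hdiff _).hasGradientAt).hasFDerivAt
    have h1 : HasDerivAt (fun t : ℝ => g (x + t • d)) (⟪gradient g (x + t • d), d⟫) t := by
      exact hg.comp_hasDerivAt t hline
    have h2 : HasDerivAt (fun t : ℝ => t * ⟪gradient g x, d⟫) (⟪gradient g x, d⟫) t := by
      simpa using (hasDerivAt_id t).mul_const (⟪gradient g x, d⟫)
    have h3 : HasDerivAt (fun t : ℝ => L * t ^ 2 / 2 * ‖d‖ ^ 2) (L * t * ‖d‖ ^ 2) t := by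
      have := ((hasDerivAt_pow 2 t).const_mul L).div_const 2
      have := this.mul_const (‖d‖ ^ 2)
      refine this.congr_deriv ?_
      ring
    exact (h1.sub h2).add h3
  have hmono : MonotoneOn φ (Set.Icc 0 1) := by
    have hdφ : Differentiable ℝ φ := fun t => (hφd t).differentiableAt
    refine monotoneOn_of_deriv_nonneg (convex_Icc 0 1) hdφ.continuous.continuousOn
      (fun t _ => (hdφ t).differentiableWithinAt) (fun t ht => ?_)
    rw [interior_Icc] at ht
    rw [(hφd t).deriv]
    have h1 : ⟪gradient g x - gradient g (x + t • d), d⟫ ≤ L * t * ‖d‖ ^ 2 := by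
      calc ⟪gradient g x - gradient g (x + t • d), d⟫
          ≤ ‖gradient g x - gradient g (x + t • d)‖ * ‖d‖ := real_inner_le_norm _ _
        _ ≤ (L * ‖x - (x + t • d)‖) * ‖d‖ :=
            mul_le_mul_of_nonneg_right (hlip _ _) (norm_nonneg _)
        _ = L * t * ‖d‖ ^ 2 := by
            have : x - (x + t • d) = -(t • d) := by abel
            rw [this, norm_neg, norm_smul, Real.norm_eq_abs, abs_of_pos ht.1]
            ring
    rw [inner_sub_left] at h1
    linarith
  have h01 := hmono (Set.left_mem_Icc.mpr zero_le_one) (Set.right_mem_Icc.mpr zero_le_one) zero_le_one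
  simp only [hφ, one_smul, zero_smul, add_zero, one_pow, zero_pow, one_mul, zero_mul,
    mul_zero, sub_zero, mul_one] at h01
  linarith [h01]

theorem stmt_15 (p n : ℕ) (hn : 0 < n)
    (g : Fin n → EuclideanSpace ℝ (Fin p) → ℝ) (L : Fin n → ℝ)
    (h : EuclideanSpace ℝ (Fin p) → ℝ)
    (H : Fin n → EuclideanSpace ℝ (Fin p) →ₗ[ℝ] EuclideanSpace ℝ (Fin p))
    (m M μh : ℝ)
    (hdiff : ∀ i, Differentiable ℝ (g i))
    (hlip : ∀ i x y, ‖gradient (g i) x - gradient (g i) y‖ ≤ L i * ‖x - y‖)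
    (hsym : ∀ i u v, ⟪H i u, v⟫ = ⟪u, H i v⟫)
    (hLm : ∀ i, L i ≤ m)
    (hHlb : ∀ i d, m * ‖d‖ ^ 2 ≤ ⟪d, H i d⟫)
    (hHub : ∀ i d, ⟪d, H i d⟫ ≤ M * ‖d‖ ^ 2)
    (hhconv : ConvexOn ℝ Set.univ h)
    (hhsc : ConvexOn ℝ Set.univ (fun x => h x - μh / 2 * ‖x‖ ^ 2))
    (xθ : Fin n → EuclideanSpace ℝ (Fin p))
    (xk1 : EuclideanSpace ℝ (Fin p))
    (hmin : ∀ x,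
      ((1 / (n : ℝ)) * ∑ i, (g i (xθ i) + ⟪gradient (g i) (xθ i), xk1 - xθ i⟫ +
        (1 / 2) * ⟪xk1 - xθ i, H i (xk1 - xθ i)⟫)) + h xk1 ≤
      ((1 / (n : ℝ)) * ∑ i, (g i (xθ i) + ⟪gradient (g i) (xθ i), x - xθ i⟫ +
        (1 / 2) * ⟪x - xθ i, H i (x - xθ i)⟫)) + h x) :
    ∀ x,
      (((1 / (n : ℝ)) * ∑ i, g i xk1) + h xk1) + (m + μh) / 2 * ‖x - xk1‖ ^ 2 ≤
      (((1 / (n : ℝ)) * ∑ i, g i x) + h x) +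
        (1 / (n : ℝ)) * ∑ i, (M + L i) / 2 * ‖x - xθ i‖ ^ 2 := by
  intro x
  set d : EuclideanSpace ℝ (Fin p) := x - xk1 with hd
  set q : Fin n → ℝ := fun i => g i (xθ i) + ⟪gradient (g i) (xθ i), xk1 - xθ i⟫ +
      (1 / 2) * ⟪xk1 - xθ i, H i (xk1 - xθ i)⟫ with hq
  set b : Fin n → ℝ := fun i => ⟪gradient (g i) (xθ i), d⟫ + ⟪xk1 - xθ i, H i d⟫ with hb
  set c : Fin n → ℝ := fun i => (1 / 2) * ⟪d, H i d⟫ with hc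
  have hexp : ∀ (t : ℝ) (i : Fin n),
      g i (xθ i) + ⟪gradient (g i) (xθ i), (xk1 + t • d) - xθ i⟫ +
        (1 / 2) * ⟪(xk1 + t • d) - xθ i, H i ((xk1 + t • d) - xθ i)⟫
      = q i + t * b i + t ^ 2 * c i := by
    intro t i
    have hpt : (xk1 + t • d) - xθ i = (xk1 - xθ i) + t • d := by module
    have hs1 : ⟪d, H i (xk1 - xθ i)⟫ = ⟪xk1 - xθ i, H i d⟫ := by
      rw [← hsym i d (xk1 - xθ i)]; exact real_inner_comm _ _
    rw [hpt]
    simp only [hq, hb, hc, inner_add_left, inner_add_right, real_inner_smul_left,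
      real_inner_smul_right, map_add, map_smul]
    linear_combination (t / 2) * hs1
  have hsum : ∀ t : ℝ,
      ∑ i, (g i (xθ i) + ⟪gradient (g i) (xθ i), (xk1 + t • d) - xθ i⟫ +
        (1 / 2) * ⟪(xk1 + t • d) - xθ i, H i ((xk1 + t • d) - xθ i)⟫)
      = (∑ i, q i) + t * (∑ i, b i) + t ^ 2 * (∑ i, c i) := by
    intro t
    rw [Finset.sum_congr rfl (fun i _ => hexp t i), Finset.sum_add_distrib,
      Finset.sum_add_distrib, ← Finset.mul_sum, ← Finset.mul_sum]
  have hxpt : xk1 + (1 : ℝ) • d = x := by rw [hd]; module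
  have hconvh : ∀ t ∈ Set.Ioc (0:ℝ) 1,
      h (xk1 + t • d) ≤ (1 - t) * h xk1 + t * h x - μh / 2 * (t * (1 - t)) * ‖d‖ ^ 2 := by
    intro t ht
    have h1 : (1 - t) • xk1 + t • x = xk1 + t • d := by rw [hd]; module
    have h2 := hhsc.2 (Set.mem_univ xk1) (Set.mem_univ x)
      (by linarith [ht.2] : (0:ℝ) ≤ 1 - t) (le_of_lt ht.1) (by ring)
    simp only [h1] at h2
    have hx' : x = xk1 + d := by rw [hd]; module
    have e1 : ‖xk1 + t • d‖ ^ 2 = ‖xk1‖ ^ 2 + 2 * (t * ⟪xk1, d⟫) + t ^ 2 * ‖d‖ ^ 2 := by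
      rw [norm_add_sq_real, real_inner_smul_right, norm_smul, Real.norm_eq_abs, mul_pow, sq_abs]
    have e2 : ‖x‖ ^ 2 = ‖xk1‖ ^ 2 + 2 * ⟪xk1, d⟫ + ‖d‖ ^ 2 := by
      rw [hx', norm_add_sq_real]
    have hnorm : ‖xk1 + t • d‖ ^ 2
        = (1 - t) * ‖xk1‖ ^ 2 + t * ‖x‖ ^ 2 - t * (1 - t) * ‖d‖ ^ 2 := by
      linear_combination e1 - t * e2
    rw [hnorm] at h2
    simp only [smul_eq_mul] at h2
    nlinarith [h2]
  have hstep : ∀ t ∈ Set.Ioc (0:ℝ) 1,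
      (1 - t) * ((1 / (n : ℝ)) * (∑ i, c i) + μh / 2 * ‖d‖ ^ 2) ≤
      (1 / (n : ℝ)) * (∑ i, b i) + (1 / (n : ℝ)) * (∑ i, c i) + h x - h xk1 := by
    intro t ht
    have h0 := hmin (xk1 + t • d)
    rw [hsum t] at h0
    have h1 := hconvh t ht
    have h2 : t * ((1 - t) * ((1 / (n : ℝ)) * (∑ i, c i) + μh / 2 * ‖d‖ ^ 2)) ≤
        t * ((1 / (n : ℝ)) * (∑ i, b i) + (1 / (n : ℝ)) * (∑ i, c i) + h x - h xk1) := by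
      nlinarith [h0, h1]
    exact le_of_mul_le_mul_left h2 ht.1
  have hKA : (1 / (n : ℝ)) * (∑ i, c i) + μh / 2 * ‖d‖ ^ 2 ≤
      (1 / (n : ℝ)) * (∑ i, b i) + (1 / (n : ℝ)) * (∑ i, c i) + h x - h xk1 := by
    haveI hne : (nhdsWithin (0:ℝ) (Set.Ioc (0:ℝ) 1)).NeBot := by
      refine mem_closure_iff_nhdsWithin_neBot.mp ?_
      rw [closure_Ioc (one_ne_zero).symm]
      exact ⟨le_refl 0, zero_le_one⟩
    have htend : Filter.Tendsto
        (fun t : ℝ => (1 - t) * ((1 / (n : ℝ)) * (∑ i, c i) + μh / 2 * ‖d‖ ^ 2))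
        (nhdsWithin (0:ℝ) (Set.Ioc (0:ℝ) 1))
        (nhds ((1 / (n : ℝ)) * (∑ i, c i) + μh / 2 * ‖d‖ ^ 2)) := by
      have hcont : Continuous (fun t : ℝ =>
          (1 - t) * ((1 / (n : ℝ)) * (∑ i, c i) + μh / 2 * ‖d‖ ^ 2)) :=
        (continuous_const.sub continuous_id).mul continuous_const
      have := hcont.tendsto 0
      simp only [sub_zero, one_mul] at this
      exact this.mono_left nhdsWithin_le_nhds
    refine le_of_tendsto htend ?_
    filter_upwards [self_mem_nhdsWithin] with t ht
    exact hstep t ht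
  -- lower bound on C
  have hCn : m / 2 * ‖d‖ ^ 2 ≤ (1 / (n : ℝ)) * (∑ i, c i) := by
    have hci : ∀ i ∈ (univ : Finset (Fin n)), m / 2 * ‖d‖ ^ 2 ≤ c i := by
      intro i _
      have := hHlb i d
      simp only [hc]
      linarith
    have hsc := Finset.sum_le_sum hci
    rw [Finset.sum_const, Finset.card_univ, Fintype.card_fin, nsmul_eq_mul] at hsc
    have hn' : (0:ℝ) < n := by exact_mod_cast hn
    calc m / 2 * ‖d‖ ^ 2 = (1 / (n:ℝ)) * ((n:ℝ) * (m / 2 * ‖d‖ ^ 2)) := by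
          field_simp
      _ ≤ (1 / (n:ℝ)) * (∑ i, c i) :=
          mul_le_mul_of_nonneg_left hsc (by positivity)
  -- g i xk1 ≤ q i
  have hg1 : ∑ i, g i xk1 ≤ ∑ i, q i := by
    refine Finset.sum_le_sum (fun i _ => ?_)
    have hdu := descent_upper (g i) (L i) (hdiff i) (hlip i) (xθ i) (xk1 - xθ i)
    rw [add_sub_cancel] at hdu
    have hH := hHlb i (xk1 - xθ i)
    have hL : L i / 2 * ‖xk1 - xθ i‖ ^ 2 ≤ m / 2 * ‖xk1 - xθ i‖ ^ 2 := by
      nlinarith [sq_nonneg ‖xk1 - xθ i‖, hLm i]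
    simp only [hq]
    linarith
  -- q i + b i + c i ≤ g i x + penalty
  have hg2 : ∀ i, q i + b i + c i ≤ g i x + (M + L i) / 2 * ‖x - xθ i‖ ^ 2 := by
    intro i
    have he := hexp 1 i
    rw [hxpt] at he
    simp only [one_pow, one_mul] at he
    have hdl := descent_lower (g i) (L i) (hdiff i) (hlip i) (xθ i) (x - xθ i)
    rw [add_sub_cancel] at hdl
    have hH := hHub i (x - xθ i)
    linarith [he, hdl, hH]
  have hg2s : (∑ i, q i) + (∑ i, b i) + (∑ i, c i) ≤
      (∑ i, g i x) + ∑ i, (M + L i) / 2 * ‖x - xθ i‖ ^ 2 := by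
    have hsle := Finset.sum_le_sum (fun i (_ : i ∈ univ) => hg2 i)
    have hsp1 : ∑ i, (q i + b i + c i) = (∑ i, q i) + (∑ i, b i) + (∑ i, c i) := by
      rw [Finset.sum_add_distrib, Finset.sum_add_distrib]
    have hsp2 : ∑ i, (g i x + (M + L i) / 2 * ‖x - xθ i‖ ^ 2)
        = (∑ i, g i x) + ∑ i, (M + L i) / 2 * ‖x - xθ i‖ ^ 2 := Finset.sum_add_distrib
    rw [hsp1, hsp2] at hsle
    exact hsle
  have hnn : (0:ℝ) ≤ 1 / (n:ℝ) := by positivity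
  have e1 : (1 / (n : ℝ)) * (∑ i, g i xk1) ≤ (1 / (n : ℝ)) * (∑ i, q i) :=
    mul_le_mul_of_nonneg_left hg1 hnn
  have e2 : (1 / (n : ℝ)) * ((∑ i, q i) + (∑ i, b i) + (∑ i, c i)) ≤
      (1 / (n : ℝ)) * ((∑ i, g i x) + ∑ i, (M + L i) / 2 * ‖x - xθ i‖ ^ 2) :=
    mul_le_mul_of_nonneg_left hg2s hnn
  rw [mul_add, mul_add, mul_add] at e2
  linarith [e1, e2, hKA, hCn]
end

section
/- Let H be symmetric with m·I ⪯ H, m > 0, and suppose d₁, d₂ satisfy the two first-order optimality inequalities: ⟨v₁, d₂⟩ + ⟨d₁, Hd₂⟩ + h(x+d₂) ≥ ⟨v₁, d₁⟩ + ⟨d₁, Hd₁⟩ + h(x+d₁) and ⟨v₂, d₁⟩ + ⟨d₂, Hd₁⟩ + h(x+d₁) ≥ ⟨v₂, d₂⟩ + ⟨d₂, Hd₂⟩ + h(x+d₂). Then ⟨d₁ − d₂, H(d₁ − d₂)⟩ ≤ ⟨v₂ − v₁, d₁ − d₂⟩, and hence m‖d₁ − d₂‖ ≤ ‖v₁ −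 v₂‖. -/
open RealInnerProductSpace

theorem stmt_18 (p : ℕ) (h : EuclideanSpace ℝ (Fin p) → ℝ)
    (H : EuclideanSpace ℝ (Fin p) →ₗ[ℝ] EuclideanSpace ℝ (Fin p))
    (hsym : ∀ u v, ⟪H u, v⟫ = ⟪u, H v⟫)
    (m : ℝ) (hm : 0 < m) (hpos : ∀ d, m * ‖d‖ ^ 2 ≤ ⟪d, H d⟫)
    (x v₁ v₂ d₁ d₂ : EuclideanSpace ℝ (Fin p))
    (h₁ : ⟪v₁, d₁⟫ + ⟪d₁, H d₁⟫ + h (x + d₁) ≤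
      ⟪v₁, d₂⟫ + ⟪d₁, H d₂⟫ + h (x + d₂))
    (h₂ : ⟪v₂, d₂⟫ + ⟪d₂, H d₂⟫ + h (x + d₂) ≤
      ⟪v₂, d₁⟫ + ⟪d₂, H d₁⟫ + h (x + d₁)) :
    ⟪d₁ - d₂, H (d₁ - d₂)⟫ ≤ ⟪v₂ - v₁, d₁ - d₂⟫ ∧
    m * ‖d₁ - d₂‖ ≤ ‖v₁ - v₂‖ := by
  have key : ⟪d₁ - d₂, H (d₁ - d₂)⟫ ≤ ⟪v₂ - v₁, d₁ - d₂⟫ := by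
    simp only [map_sub, inner_sub_left, inner_sub_right]
    linarith
  refine ⟨key, ?_⟩
  have h1 : m * ‖d₁ - d₂‖ ^ 2 ≤ ⟪d₁ - d₂, H (d₁ - d₂)⟫ := hpos _
  have h2 : ⟪v₂ - v₁, d₁ - d₂⟫ ≤ ‖v₁ - v₂‖ * ‖d₁ - d₂‖ := by
    calc ⟪v₂ - v₁, d₁ - d₂⟫ ≤ ‖v₂ - v₁‖ * ‖d₁ - d₂‖ := real_inner_le_norm _ _
    _ = ‖v₁ - v₂‖ * ‖d₁ - d₂‖ := by rw [norm_sub_rev]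
  rcases eq_or_ne d₁ d₂ with he | he
  · simp [he, norm_nonneg]
  · have hdpos : 0 < ‖d₁ - d₂‖ := by
      simpa [sub_eq_zero] using he
    have : m * ‖d₁ - d₂‖ ^ 2 ≤ ‖v₁ - v₂‖ * ‖d₁ - d₂‖ := by linarith
    nlinarith [this, hdpos]
end
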